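/- (Two-dimensional case: the Maccone–Pati relations become equalities.) Suppose dim H = 2 and let ψ⊥ be a unit vector orthogonal to ψ. Then for each sign s ∈ {+1, −1}: (i) ΔA² + ΔB² = s·i⟨[A,B]⟩ + |⟪ψ, (A + s·i·B) ψ⊥⟫|²; and (ii) if moreover ΔA > 0 and ΔB > 0, then ΔA·ΔB·(1 − (1/2)|⟪ψ, (A/ΔA + s·i·B/ΔB) ψ⊥⟫|²) = s·(i/2)⟨[A,B]⟩. -/

import Mathlib

/-! Write `Ăψ = Aψ - ⟨A⟩ψ` and `B̆ψ = Bψ - ⟨B⟩ψ`. For a unit vector `ψ` these deviation vectors are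
orthogonal to `ψ`, `ΔA = ‖Ăψ‖`, `ΔB = ‖B̆ψ‖` and `i⟨[A,B]⟩ = -2 Im ⟪Ăψ, B̆ψ⟫`. For `ψ⊥ ⟂ ψ` and real
`x, y` one has `⟪ψ, (xA + iyB) ψ⊥⟫ = ⟪xĂψ - iyB̆ψ, ψ⊥⟫`; in dimension two the vector `xĂψ - iyB̆ψ`,
being orthogonal to `ψ`, is a multiple of `ψ⊥`, so this inner product has modulus
`‖xĂψ - iyB̆ψ‖`. Expanding the norm gives
`|⟪ψ, (xA + iyB) ψ⊥⟫|² = x²ΔA² + y²ΔB² - xy i⟨[A,B]⟩`,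
and the two identities are the cases `(x, y) = (1, s)` and `(x, y) = (1/ΔA, s/ΔB)`. -/

open scoped ComplexInnerProductSpace BigOperators

noncomputable section

variable {H : Type*} [NormedAddCommGroup H] [InnerProductSpace ℂ H]

/-- Expectation value ⟨A⟩ = Re ⟪ψ, A ψ⟫ of an operator in the state ψ. -/
def expVal (ψ : H) (A : H →ₗ[ℂ] H) : ℝ := (⟪ψ, A ψ⟫).re

/-- Variance ΔA² = ⟨A²⟩ − ⟨A⟩². -/
def varOf (ψ : H) (A : H →ₗ[ℂ] H) : ℝ := (⟪ψ, A (A ψ)⟫).re - (expVal ψ A) ^ 2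

/-- Standard deviation ΔA = √(ΔA²). -/
def stdDev (ψ : H) (A : H →ₗ[ℂ] H) : ℝ := Real.sqrt (varOf ψ A)

/-- The real number i⟨[A,B]⟩. -/
def commRe (ψ : H) (A B : H →ₗ[ℂ] H) : ℝ :=
  (Complex.I * ⟪ψ, (A ∘ₗ B - B ∘ₗ A) ψ⟫).re

/-- The projection Π = I − |ψ⟩⟨ψ|. -/
def projPerp (ψ : H) : H →ₗ[ℂ] H :=
  LinearMap.id - ((innerSL ℂ ψ).smulRight ψ).toLinearMap

/-- The deviation operator Ă = A − ⟨A⟩I. -/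
def devOp (ψ : H) (A : H →ₗ[ℂ] H) : H →ₗ[ℂ] H :=
  A - (expVal ψ A : ℂ) • LinearMap.id

/-- The operator C = −i[A,B]. -/
def opC (A B : H →ₗ[ℂ] H) : H →ₗ[ℂ] H := (-Complex.I) • (A ∘ₗ B - B ∘ₗ A)

/-- The operator F = ĂB̆ + B̆Ă. -/
def opF (ψ : H) (A B : H →ₗ[ℂ] H) : H →ₗ[ℂ] H :=
  devOp ψ A ∘ₗ devOp ψ B + devOp ψ B ∘ₗ devOp ψ A

theorem orthonormal_pair {𝕜 E : Type*} [RCLike 𝕜] [NormedAddCommGroup E]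
    [InnerProductSpace 𝕜 E] {u v : E} (hu : ‖u‖ = 1) (hv : ‖v‖ = 1) (huv : inner 𝕜 u v = 0) :
    Orthonormal 𝕜 ![u, v] := by
  rw [orthonormal_iff_ite]
  intro i j
  fin_cases i <;> fin_cases j <;> simp [huv, inner_eq_zero_symm.mp huv, hu, hv]

theorem eq_inner_smul_add_inner_smul_of_finrank_eq_two {𝕜 E : Type*} [RCLike 𝕜]
    [NormedAddCommGroup E] [InnerProductSpace 𝕜 E] (hdim : Module.finrank 𝕜 E = 2)
    {u v : E} (huv : Orthonormal 𝕜 ![u, v]) (w : E) :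
    w = inner 𝕜 u w • u + inner 𝕜 v w • v := by
  have : FiniteDimensional 𝕜 E := Module.finite_of_finrank_eq_succ hdim
  have hspan : ⊤ ≤ Submodule.span 𝕜 (Set.range ![u, v]) :=
    (huv.linearIndependent.span_eq_top_of_card_eq_finrank (by simp [hdim])).ge
  simpa [Fin.sum_univ_two] using ((OrthonormalBasis.mk huv hspan).sum_repr' w).symm

theorem norm_inner_eq_norm_of_finrank_eq_two {𝕜 E : Type*} [RCLike 𝕜]
    [NormedAddCommGroup E] [InnerProductSpace 𝕜 E] (hdim : Module.finrank 𝕜 E = 2)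
    {u v w : E} (huv : Orthonormal 𝕜 ![u, v]) (hw : inner 𝕜 u w = 0) :
    ‖inner 𝕜 w v‖ = ‖w‖ := by
  have hw_eq := eq_inner_smul_add_inner_smul_of_finrank_eq_two hdim huv w
  rw [hw, zero_smul, zero_add] at hw_eq
  conv_rhs => rw [hw_eq]
  rw [norm_smul, show ‖v‖ = 1 from huv.1 1, mul_one, norm_inner_symm]

theorem norm_sub_real_smul_I_smul_sq (x y : ℝ) (u v : H) :
    ‖(x : ℂ) • u - ((y : ℂ) * Complex.I) • v‖ ^ 2
      = x ^ 2 * ‖u‖ ^ 2 + y ^ 2 * ‖v‖ ^ 2 + 2 * x * y * (⟪u, v⟫).im := by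
  rw [norm_sub_sq (𝕜 := ℂ), norm_smul, norm_smul, inner_smul_left, inner_smul_right]
  simp only [Complex.conj_ofReal, RCLike.re_to_complex, Complex.mul_re, Complex.mul_im,
    Complex.ofReal_re, Complex.ofReal_im, Complex.I_re, Complex.I_im, Complex.norm_mul,
    Complex.norm_real, Complex.norm_I, Real.norm_eq_abs, mul_pow, sq_abs]
  ring

section deviation

variable {ψ : H} {A B : H →ₗ[ℂ] H}

theorem ofReal_expVal (hA : A.IsSymmetric) : (expVal ψ A : ℂ) = ⟪ψ, A ψ⟫ :=
  Complex.conj_eq_iff_re.mp (by rw [inner_conj_symm]; exact hA ψ ψ)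

theorem inner_devOp_apply_self_eq_zero (hψ : ‖ψ‖ = 1) (hA : A.IsSymmetric) :
    ⟪ψ, devOp ψ A ψ⟫ = 0 := by
  rw [devOp, LinearMap.sub_apply, LinearMap.smul_apply, LinearMap.id_apply, inner_sub_right,
    inner_smul_right, ofReal_expVal hA, inner_self_eq_norm_sq_to_K, hψ]
  simp

theorem varOf_eq_norm_devOp_apply_sq (hψ : ‖ψ‖ = 1) (hA : A.IsSymmetric) :
    varOf ψ A = ‖devOp ψ A ψ‖ ^ 2 := by
  rw [devOp, LinearMap.sub_apply, LinearMap.smul_apply, LinearMap.id_apply,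
    norm_sub_sq (𝕜 := ℂ), inner_smul_right, hA, ← ofReal_expVal hA, norm_smul, hψ, varOf,
    ← hA ψ (A ψ), inner_self_eq_norm_sq_to_K]
  simp only [Complex.coe_algebraMap, ← Complex.ofReal_pow, ← Complex.ofReal_mul,
    RCLike.re_to_complex, Complex.ofReal_re, Complex.norm_real, Real.norm_eq_abs, sq_abs, mul_one]
  ring

theorem stdDev_sq (hψ : ‖ψ‖ = 1) (hA : A.IsSymmetric) : stdDev ψ A ^ 2 = varOf ψ A :=
  Real.sq_sqrt (varOf_eq_norm_devOp_apply_sq hψ hA ▸ sq_nonneg _)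

theorem inner_apply_eq_inner_devOp_apply (hA : A.IsSymmetric) {φ : H} (hφ : ⟪ψ, φ⟫ = 0) :
    ⟪ψ, A φ⟫ = ⟪devOp ψ A ψ, φ⟫ := by
  simp [devOp, hφ, hA ψ φ]

theorem im_inner_devOp_apply (hA : A.IsSymmetric) (hB : B.IsSymmetric) :
    (⟪devOp ψ A ψ, devOp ψ B ψ⟫).im = (⟪A ψ, B ψ⟫).im := by
  have hAψ : ⟪A ψ, ψ⟫ = expVal ψ A := by rw [hA, ofReal_expVal hA]
  simp [devOp, hAψ, ← ofReal_expVal hB, inner_self_eq_norm_sq_to_K, ← Complex.ofReal_pow]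

theorem commRe_eq_neg_two_mul_im_inner (hA : A.IsSymmetric) (hB : B.IsSymmetric) :
    commRe ψ A B = -2 * (⟪A ψ, B ψ⟫).im := by
  rw [commRe, LinearMap.sub_apply, inner_sub_right, LinearMap.comp_apply, LinearMap.comp_apply,
    ← hA ψ (B ψ), ← hB ψ (A ψ), ← inner_conj_symm (B ψ) (A ψ), Complex.mul_re,
    Complex.I_re, Complex.I_im, Complex.sub_im, Complex.conj_im]
  ring

end deviation

theorem norm_inner_apply_sq_of_finrank_eq_two {ψ φ : H} {A B : H →ₗ[ℂ] H}
    (hdim : Module.finrank ℂ H = 2) (hψ : ‖ψ‖ = 1) (hφ : ‖φ‖ = 1) (hψφ : ⟪ψ, φ⟫ = 0)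
    (hA : A.IsSymmetric) (hB : B.IsSymmetric) (x y : ℝ) :
    ‖⟪ψ, ((x : ℂ) • A + ((y : ℂ) * Complex.I) • B) φ⟫‖ ^ 2
      = x ^ 2 * varOf ψ A + y ^ 2 * varOf ψ B - x * y * commRe ψ A B := by
  set w := (x : ℂ) • devOp ψ A ψ - ((y : ℂ) * Complex.I) • devOp ψ B ψ
  have hw : ⟪ψ, w⟫ = 0 := by
    simp [w, inner_devOp_apply_self_eq_zero hψ hA, inner_devOp_apply_self_eq_zero hψ hB]
  have h_inner : ⟪ψ, ((x : ℂ) • A + ((y : ℂ) * Complex.I) • B) φ⟫ = ⟪w, φ⟫ := by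
    simp [w, inner_apply_eq_inner_devOp_apply hA hψφ, inner_apply_eq_inner_devOp_apply hB hψφ]
    ring
  rw [h_inner, norm_inner_eq_norm_of_finrank_eq_two hdim (orthonormal_pair hψ hφ hψφ) hw,
    norm_sub_real_smul_I_smul_sq, varOf_eq_norm_devOp_apply_sq hψ hA,
    varOf_eq_norm_devOp_apply_sq hψ hB, commRe_eq_neg_two_mul_im_inner hA hB,
    im_inner_devOp_apply hA hB]
  ring

theorem qubit_maccone_pati_equalities_general
    {H : Type*} [NormedAddCommGroup H] [InnerProductSpace ℂ H]
    (A B : H →ₗ[ℂ] H) (hA : A.IsSymmetric) (hB : B.IsSymmetric)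
    (ψ : H) (hψ : ‖ψ‖ = 1)
    (hdim : Module.finrank ℂ H = 2)
    (ψperp : H) (hperpunit : ‖ψperp‖ = 1) (hperp : ⟪ψ, ψperp⟫ = 0)
    (s : ℝ) (hs : s = 1 ∨ s = -1) :
    (varOf ψ A + varOf ψ B
        = s * commRe ψ A B + ‖⟪ψ, (A + ((s : ℂ) * Complex.I) • B) ψperp⟫‖ ^ 2)
      ∧ (0 < stdDev ψ A → 0 < stdDev ψ B →
          stdDev ψ A * stdDev ψ B *
              (1 - (1 / 2) * ‖⟪ψ, (((stdDev ψ A : ℂ))⁻¹ • A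
                  + ((s : ℂ) * Complex.I * ((stdDev ψ B : ℂ))⁻¹) • B) ψperp⟫‖ ^ 2)
            = s * (commRe ψ A B / 2)) := by
  have key := norm_inner_apply_sq_of_finrank_eq_two hdim hψ hperpunit hperp hA hB
  have hs_sq : s ^ 2 = 1 := by rcases hs with rfl | rfl <;> norm_num
  constructor
  · have h := key 1 s
    rw [Complex.ofReal_one, one_smul] at h
    rw [h, hs_sq]
    ring
  · intro hα hβ
    have h := key (stdDev ψ A)⁻¹ (s * (stdDev ψ B)⁻¹)
    push_cast at h
    rw [mul_right_comm (s : ℂ) _ Complex.I] at h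
    rw [h, ← stdDev_sq hψ hA, ← stdDev_sq hψ hB, mul_pow, hs_sq]
    field_simp
    ring

theorem qubit_maccone_pati_equalities
    {H : Type*} [NormedAddCommGroup H] [InnerProductSpace ℂ H] [FiniteDimensional ℂ H]
    (A B : H →ₗ[ℂ] H) (hA : A.IsSymmetric) (hB : B.IsSymmetric)
    (ψ : H) (hψ : ‖ψ‖ = 1)
    (hdim : Module.finrank ℂ H = 2)
    (ψperp : H) (hperpunit : ‖ψperp‖ = 1) (hperp : ⟪ψ, ψperp⟫ = 0)
    (s : ℝ) (hs : s = 1 ∨ s = -1) :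
    (varOf ψ A + varOf ψ B
        = s * commRe ψ A B + ‖⟪ψ, (A + ((s : ℂ) * Complex.I) • B) ψperp⟫‖ ^ 2)
      ∧ (0 < stdDev ψ A → 0 < stdDev ψ B →
          stdDev ψ A * stdDev ψ B *
              (1 - (1 / 2) * ‖⟪ψ, (((stdDev ψ A : ℂ))⁻¹ • A
                  + ((s : ℂ) * Complex.I * ((stdDev ψ B : ℂ))⁻¹) • B) ψperp⟫‖ ^ 2)
            = s * (commRe ψ A B / 2)) :=
  qubit_maccone_pati_equalities_general A B hA hB ψ hψ hdim ψperp hperpunit hperp s hs
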